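/- The binary icosahedral group ℐ = ⟨i, σ⟩, with σ = (φ⁻¹ + i + φ·j)/2 and φ = (1+√5)/2, is a subgroup of the unit quaternions of order 120, and contains the binary tetrahedral group 𝒯 as a subgroup. -/

import Mathlib

open Quaternion

noncomputable def qi : ℍ[ℝ] := ⟨0, 1, 0, 0⟩
noncomputable def ϖ : ℍ[ℝ] := ⟨-(1/2), 1/2, 1/2, 1/2⟩

/-- The golden ratio `φ = (1 + √5)/2`. -/
noncomputable def φ : ℝ := (1 + Real.sqrt 5) / 2

/-- The element `σ = (φ⁻¹ + i + φ·j)/2`. -/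
noncomputable def σq : ℍ[ℝ] := ⟨φ⁻¹ / 2, 1 / 2, φ / 2, 0⟩

noncomputable def ui : ℍ[ℝ]ˣ := Units.mk0 qi (by
  intro h
  have h2 := congrArg (fun q : ℍ[ℝ] => q.imI) h
  norm_num [qi] at h2)
noncomputable def uϖ : ℍ[ℝ]ˣ := Units.mk0 ϖ (by
  intro h
  have h2 := congrArg (fun q : ℍ[ℝ] => q.imI) h
  norm_num [ϖ] at h2)
noncomputable def uσ : ℍ[ℝ]ˣ := Units.mk0 σq (by
  have : (0:ℝ) < 1 / 2 := by norm_num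
  intro h
  have h2 := congrArg (fun q : ℍ[ℝ] => q.imI) h
  norm_num [σq] at h2)

/-- The binary tetrahedral group `𝒯 = ⟨i, ϖ⟩`. -/
noncomputable def binT : Subgroup ℍ[ℝ]ˣ := Subgroup.closure {ui, uϖ}
/-- The binary icosahedral group `ℐ = ⟨i, σ⟩`. -/
noncomputable def binI : Subgroup ℍ[ℝ]ˣ := Subgroup.closure {ui, uσ}

/- ### Auxiliary integer model of the icosian ring.
A `Q4` with fields `a,…,h` encodes the quaternion
`((a+b√5)/4, (c+d√5)/4, (e+f√5)/4, (g+h√5)/4)`. -/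
structure Q4 where
  a : ℤ
  b : ℤ
  c : ℤ
  d : ℤ
  e : ℤ
  f : ℤ
  g : ℤ
  h : ℤ
deriving DecidableEq

/-- Raw (unscaled) quaternion product: if `p, q` encode with denominator 4,
`qmul p q` encodes the product with denominator 16. -/
def qmul (p q : Q4) : Q4 where
  a := p.a*q.a + 5*p.b*q.b - (p.c*q.c + 5*p.d*q.d) - (p.e*q.e + 5*p.f*q.f) - (p.g*q.g + 5*p.h*q.h)
  b := p.a*q.b + p.b*q.a - (p.c*q.d + p.d*q.c) - (p.e*q.f + p.f*q.e) - (p.g*q.h + p.h*q.g)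
  c := p.a*q.c + 5*p.b*q.d + (p.c*q.a + 5*p.d*q.b) + (p.e*q.g + 5*p.f*q.h) - (p.g*q.e + 5*p.h*q.f)
  d := p.a*q.d + p.b*q.c + (p.c*q.b + p.d*q.a) + (p.e*q.h + p.f*q.g) - (p.g*q.f + p.h*q.e)
  e := p.a*q.e + 5*p.b*q.f - (p.c*q.g + 5*p.d*q.h) + (p.e*q.a + 5*p.f*q.b) + (p.g*q.c + 5*p.h*q.d)
  f := p.a*q.f + p.b*q.e - (p.c*q.h + p.d*q.g) + (p.e*q.b + p.f*q.a) + (p.g*q.d + p.h*q.c)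
  g := p.a*q.g + 5*p.b*q.h + (p.c*q.e + 5*p.d*q.f) - (p.e*q.c + 5*p.f*q.d) + (p.g*q.a + 5*p.h*q.b)
  h := p.a*q.h + p.b*q.g + (p.c*q.f + p.d*q.e) - (p.e*q.d + p.f*q.c) + (p.g*q.b + p.h*q.a)

def scale4 (p : Q4) : Q4 := ⟨4*p.a, 4*p.b, 4*p.c, 4*p.d, 4*p.e, 4*p.f, 4*p.g, 4*p.h⟩
def qone : Q4 := ⟨4,0,0,0,0,0,0,0⟩
def si : Q4 := ⟨0,0,4,0,0,0,0,0⟩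
def ss : Q4 := ⟨-1,1,2,0,1,1,0,0⟩
def sϖ : Q4 := ⟨-2,0,2,0,2,0,2,0⟩
def L0 : List Q4 := [⟨4, 0, 0, 0, 0, 0, 0, 0⟩, ⟨0, 0, 4, 0, 0, 0, 0, 0⟩, ⟨-1, 1, 2, 0, 1, 1, 0, 0⟩, ⟨-4, 0, 0, 0, 0, 0, 0, 0⟩, ⟨-2, 0, -1, 1, 0, 0, 1, 1⟩, ⟨-2, 0, -1, 1, 0, 0, -1, -1⟩, ⟨-1, -1, -1, 1, 2, 0, 0, 0⟩, ⟨0, 0, -4, 0, 0, 0, 0, 0⟩, ⟨1, -1, -2, 0, -1, -1, 0, 0⟩, ⟨1, -1, -2, 0, 1, 1, 0, 0⟩]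
def L1 : List Q4 := [⟨1, -1, -1, -1, 0, 0, 2, 0⟩, ⟨1, -1, 2, 0, -1, -1, 0, 0⟩, ⟨1, -1, -1, -1, 0, 0, -2, 0⟩, ⟨-1, -1, 1, -1, -2, 0, 0, 0⟩, ⟨2, 0, 1, -1, 0, 0, -1, -1⟩, ⟨2, 0, 1, -1, 0, 0, 1, 1⟩, ⟨1, 1, 1, -1, -2, 0, 0, 0⟩, ⟨-2, 0, 1, -1, 0, 0, -1, -1⟩, ⟨1, 1, 1, -1, 2, 0, 0, 0⟩, ⟨-1, 1, -1, -1, 0, 0, -2, 0⟩]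
def L2 : List Q4 := [⟨-2, 0, 1, -1, 0, 0, 1, 1⟩, ⟨-1, 1, 0, 0, -2, 0, 1, 1⟩, ⟨-1, 1, 0, 0, -2, 0, -1, -1⟩, ⟨-1, 1, -1, -1, 0, 0, 2, 0⟩, ⟨-1, 1, -2, 0, -1, -1, 0, 0⟩, ⟨-1, 1, 2, 0, -1, -1, 0, 0⟩, ⟨-1, 1, 1, 1, 0, 0, -2, 0⟩, ⟨-1, 1, -2, 0, 1, 1, 0, 0⟩, ⟨-1, 1, 1, 1, 0, 0, 2, 0⟩, ⟨1, 1, -1, 1, 2, 0, 0, 0⟩]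
def L3 : List Q4 := [⟨0, 0, -1, 1, -1, -1, -2, 0⟩, ⟨0, 0, -1, 1, 1, 1, -2, 0⟩, ⟨1, 1, -1, 1, -2, 0, 0, 0⟩, ⟨2, 0, -1, 1, 0, 0, -1, -1⟩, ⟨0, 0, -1, 1, 1, 1, 2, 0⟩, ⟨2, 0, -2, 0, 2, 0, 2, 0⟩, ⟨0, 0, -1, 1, -1, -1, 2, 0⟩, ⟨2, 0, 1, 1, 1, -1, 0, 0⟩, ⟨2, 0, -2, 0, 2, 0, -2, 0⟩, ⟨2, 0, -1, 1, 0, 0, 1, 1⟩]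
def L4 : List Q4 := [⟨-1, -1, -1, 1, -2, 0, 0, 0⟩, ⟨1, -1, 1, 1, 0, 0, 2, 0⟩, ⟨1, -1, 0, 0, 2, 0, -1, -1⟩, ⟨1, -1, 0, 0, 2, 0, 1, 1⟩, ⟨1, -1, 1, 1, 0, 0, -2, 0⟩, ⟨1, -1, 2, 0, 1, 1, 0, 0⟩, ⟨1, -1, 0, 0, -2, 0, 1, 1⟩, ⟨2, 0, 2, 0, -2, 0, 2, 0⟩, ⟨1, -1, 0, 0, -2, 0, -1, -1⟩, ⟨-1, -1, 2, 0, 0, 0, 1, -1⟩]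
def L5 : List Q4 := [⟨2, 0, 2, 0, 2, 0, 2, 0⟩, ⟨-1, -1, 1, -1, 2, 0, 0, 0⟩, ⟨2, 0, 2, 0, 2, 0, -2, 0⟩, ⟨0, 0, 1, -1, 1, 1, -2, 0⟩, ⟨-1, -1, 2, 0, 0, 0, -1, 1⟩, ⟨0, 0, 2, 0, -1, 1, 1, 1⟩, ⟨2, 0, 2, 0, -2, 0, -2, 0⟩, ⟨0, 0, 2, 0, -1, 1, -1, -1⟩, ⟨0, 0, 1, -1, 1, 1, 2, 0⟩, ⟨0, 0, 1, -1, -1, -1, 2, 0⟩]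
def L6 : List Q4 := [⟨0, 0, 1, -1, -1, -1, -2, 0⟩, ⟨-2, 0, 2, 0, -2, 0, -2, 0⟩, ⟨-2, 0, -1, -1, -1, 1, 0, 0⟩, ⟨-2, 0, 2, 0, -2, 0, 2, 0⟩, ⟨-2, 0, 2, 0, 2, 0, 2, 0⟩, ⟨-1, 1, 0, 0, 2, 0, 1, 1⟩, ⟨-2, 0, -1, -1, 1, -1, 0, 0⟩, ⟨-2, 0, 0, 0, -1, -1, -1, 1⟩, ⟨-2, 0, 2, 0, 2, 0, -2, 0⟩, ⟨-2, 0, 0, 0, 1, 1, -1, 1⟩]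
def L7 : List Q4 := [⟨-2, 0, -2, 0, -2, 0, -2, 0⟩, ⟨-2, 0, 1, 1, -1, 1, 0, 0⟩, ⟨-2, 0, -2, 0, -2, 0, 2, 0⟩, ⟨-2, 0, 0, 0, 1, 1, 1, -1⟩, ⟨-2, 0, -2, 0, 2, 0, 2, 0⟩, ⟨-2, 0, 0, 0, -1, -1, 1, -1⟩, ⟨-2, 0, 1, 1, 1, -1, 0, 0⟩, ⟨-1, 1, 0, 0, 2, 0, -1, -1⟩, ⟨-2, 0, -2, 0, 2, 0, -2, 0⟩, ⟨1, 1, -2, 0, 0, 0, -1, 1⟩]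
def L8 : List Q4 := [⟨1, 1, -2, 0, 0, 0, 1, -1⟩, ⟨0, 0, -2, 0, 1, -1, -1, -1⟩, ⟨0, 0, -2, 0, 1, -1, 1, 1⟩, ⟨-1, -1, -2, 0, 0, 0, -1, 1⟩, ⟨2, 0, -2, 0, -2, 0, -2, 0⟩, ⟨0, 0, -2, 0, -1, 1, 1, 1⟩, ⟨2, 0, -2, 0, -2, 0, 2, 0⟩, ⟨0, 0, -2, 0, -1, 1, -1, -1⟩, ⟨-1, -1, -2, 0, 0, 0, 1, -1⟩, ⟨2, 0, 0, 0, -1, -1, 1, -1⟩]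
def L9 : List Q4 := [⟨-1, -1, 0, 0, 1, -1, 2, 0⟩, ⟨2, 0, -1, -1, 1, -1, 0, 0⟩, ⟨-1, -1, 0, 0, 1, -1, -2, 0⟩, ⟨2, 0, 0, 0, -1, -1, -1, 1⟩, ⟨2, 0, 1, 1, -1, 1, 0, 0⟩, ⟨2, 0, 0, 0, 1, 1, 1, -1⟩, ⟨2, 0, 0, 0, 1, 1, -1, 1⟩, ⟨2, 0, -1, -1, -1, 1, 0, 0⟩, ⟨0, 0, -1, -1, -2, 0, 1, -1⟩, ⟨1, 1, 2, 0, 0, 0, 1, -1⟩]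
def L10 : List Q4 := [⟨0, 0, -1, -1, 2, 0, 1, -1⟩, ⟨0, 0, 2, 0, 1, -1, -1, -1⟩, ⟨0, 0, 2, 0, 1, -1, 1, 1⟩, ⟨1, 1, 2, 0, 0, 0, -1, 1⟩, ⟨0, 0, -1, -1, 2, 0, -1, 1⟩, ⟨0, 0, -1, -1, -2, 0, -1, 1⟩, ⟨1, 1, 0, 0, -1, 1, -2, 0⟩, ⟨0, 0, 0, 0, -4, 0, 0, 0⟩, ⟨1, 1, 0, 0, -1, 1, 2, 0⟩, ⟨1, 1, 0, 0, 1, -1, 2, 0⟩]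
def L11 : List Q4 := [⟨1, 1, 0, 0, 1, -1, -2, 0⟩, ⟨0, 0, 1, 1, 2, 0, -1, 1⟩, ⟨0, 0, 0, 0, 0, 0, -4, 0⟩, ⟨0, 0, 1, 1, -2, 0, -1, 1⟩, ⟨0, 0, 1, 1, -2, 0, 1, -1⟩, ⟨0, 0, 1, 1, 2, 0, 1, -1⟩, ⟨0, 0, 0, 0, 0, 0, 4, 0⟩, ⟨0, 0, 0, 0, 4, 0, 0, 0⟩, ⟨-1, -1, 0, 0, -1, 1, -2, 0⟩, ⟨-1, -1, 0, 0, -1, 1, 2, 0⟩]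
/-- The 120 icosians (scaled by 4, in the basis 1, √5). -/
def L : List Q4 := L0 ++ L1 ++ L2 ++ L3 ++ L4 ++ L5 ++ L6 ++ L7 ++ L8 ++ L9 ++ L10 ++ L11

theorem hlen : L.length = 120 := by decide
theorem hone_mem : qone ∈ L := by decide
theorem hϖ_mem : sϖ ∈ L := by decide
set_option maxRecDepth 40000 in
theorem hnodup : L.Nodup := by decide
set_option maxRecDepth 40000 in
theorem hclosed : ∀ x ∈ L, (∃ z ∈ L, qmul x si = scale4 z) ∧ (∃ z ∈ L, qmul x ss = scale4 z) := by
  decide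
set_option maxRecDepth 40000 in
theorem hwit : ∀ n : Fin L.length, L.get n = qone ∨ ∃ m : Fin L.length, (m:ℕ) < (n:ℕ) ∧
    (scale4 (L.get n) = qmul (L.get m) si ∨ scale4 (L.get n) = qmul (L.get m) ss) := by
  decide

/- ### The real interpretation -/

noncomputable def tg (x y : ℤ) : ℝ := ((x:ℝ) + (y:ℝ) * Real.sqrt 5) / 4
noncomputable def gq (p : Q4) : ℍ[ℝ] := ⟨tg p.a p.b, tg p.c p.d, tg p.e p.f, tg p.g p.h⟩
noncomputable def tg16 (x y : ℤ) : ℝ := ((x:ℝ) + (y:ℝ) * Real.sqrt 5) / 16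
noncomputable def gq16 (p : Q4) : ℍ[ℝ] := ⟨tg16 p.a p.b, tg16 p.c p.d, tg16 p.e p.f, tg16 p.g p.h⟩

theorem s5 : Real.sqrt 5 * Real.sqrt 5 = 5 :=
  Real.mul_self_sqrt (by norm_num)

theorem gq16_scale4 (p : Q4) : gq16 (scale4 p) = gq p := by
  ext <;> simp [gq, gq16, scale4, tg, tg16] <;> push_cast <;> ring

theorem gq16_qmul (p q : Q4) : gq16 (qmul p q) = gq p * gq q := by
  ext
  · show tg16 (qmul p q).a (qmul p q).b = _
    rw [Quaternion.re_mul]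
    simp only [qmul, gq, tg, tg16]
    push_cast
    linear_combination (-((p.b:ℝ)*(q.b:ℝ) - (p.d:ℝ)*(q.d:ℝ) - (p.f:ℝ)*(q.f:ℝ) - (p.h:ℝ)*(q.h:ℝ))/16) * s5
  · show tg16 (qmul p q).c (qmul p q).d = _
    rw [Quaternion.imI_mul]
    simp only [qmul, gq, tg, tg16]
    push_cast
    linear_combination (-((p.b:ℝ)*(q.d:ℝ) + (p.d:ℝ)*(q.b:ℝ) + (p.f:ℝ)*(q.h:ℝ) - (p.h:ℝ)*(q.f:ℝ))/16) * s5
  · show tg16 (qmul p q).e (qmul p q).f = _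
    rw [Quaternion.imJ_mul]
    simp only [qmul, gq, tg, tg16]
    push_cast
    linear_combination (-((p.b:ℝ)*(q.f:ℝ) - (p.d:ℝ)*(q.h:ℝ) + (p.f:ℝ)*(q.b:ℝ) + (p.h:ℝ)*(q.d:ℝ))/16) * s5
  · show tg16 (qmul p q).g (qmul p q).h = _
    rw [Quaternion.imK_mul]
    simp only [qmul, gq, tg, tg16]
    push_cast
    linear_combination (-((p.b:ℝ)*(q.h:ℝ) + (p.d:ℝ)*(q.f:ℝ) - (p.f:ℝ)*(q.d:ℝ) + (p.h:ℝ)*(q.b:ℝ))/16) * s5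

theorem tg_inj {x y x' y' : ℤ} (h : tg x y = tg x' y') : x = x' ∧ y = y' := by
  have h5 : Irrational (Real.sqrt 5) := by
    simpa using (by norm_num : Nat.Prime 5).irrational_sqrt
  have hy : y = y' := by
    by_contra hne
    apply h5
    refine ⟨((x' - x : ℤ) : ℚ) / ((y - y' : ℤ) : ℚ), ?_⟩
    have hne' : ((y:ℝ) - y') ≠ 0 := by
      have hyy : (y:ℝ) ≠ (y':ℝ) := by exact_mod_cast hne
      exact sub_ne_zero.mpr hyy
    have hh : ((y:ℝ) - y') * Real.sqrt 5 = (x':ℝ) - x := by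
      simp only [tg] at h
      linarith
    push_cast
    rw [div_eq_iff hne']
    linear_combination -hh
  refine ⟨?_, hy⟩
  subst hy
  have hx : (x:ℝ) = x' := by
    simp only [tg] at h
    linarith
  exact_mod_cast hx

theorem gq_inj : Function.Injective gq := by
  intro p q h
  have h1 : tg p.a p.b = tg q.a q.b := congrArg (fun x : ℍ[ℝ] => x.re) h
  have h2 : tg p.c p.d = tg q.c q.d := congrArg (fun x : ℍ[ℝ] => x.imI) h
  have h3 : tg p.e p.f = tg q.e q.f := congrArg (fun x : ℍ[ℝ] => x.imJ) h
  have h4 : tg p.g p.h = tg q.g q.h := congrArg (fun x : ℍ[ℝ] => x.imK) h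
  obtain ⟨e1, e2⟩ := tg_inj h1
  obtain ⟨e3, e4⟩ := tg_inj h2
  obtain ⟨e5, e6⟩ := tg_inj h3
  obtain ⟨e7, e8⟩ := tg_inj h4
  cases p; cases q; simp_all

theorem φ_inv : φ⁻¹ = (Real.sqrt 5 - 1) / 2 := by
  have h : φ * ((Real.sqrt 5 - 1) / 2) = 1 := by
    simp only [φ]
    linear_combination s5 / 4
  exact inv_eq_of_mul_eq_one_right h

theorem σq_eq : σq = ⟨(Real.sqrt 5 - 1)/4, 1/2, (1 + Real.sqrt 5)/4, 0⟩ := by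
  rw [σq, φ_inv]
  ext <;> simp [φ] <;> ring

theorem gq_one : gq qone = 1 := by
  ext <;> simp [gq, qone, tg]

theorem gq_si : gq si = qi := by
  ext <;> simp [gq, si, qi, tg]

theorem gq_ss : gq ss = σq := by
  rw [σq_eq]
  ext <;> simp [gq, ss, tg] <;> push_cast <;> ring

theorem gq_sϖ : gq sϖ = ϖ := by
  ext <;> simp [gq, sϖ, ϖ, tg] <;> push_cast <;> ring

/- ### The finite set of 120 unit quaternions -/

noncomputable instance : DecidableEq ℍ[ℝ] := Classical.decEq _

noncomputable def T : Finset ℍ[ℝ] := (L.map gq).toFinset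

theorem T_card : T.card = 120 := by
  have hnd : (L.map gq).Nodup := hnodup.map gq_inj
  rw [T, List.toFinset_card_of_nodup hnd, List.length_map, hlen]

theorem mem_T {x : ℍ[ℝ]} : x ∈ T ↔ ∃ p ∈ L, gq p = x := by
  simp [T, List.mem_map]

theorem ui_val : ((ui : ℍ[ℝ]ˣ) : ℍ[ℝ]) = qi := rfl
theorem uσ_val : ((uσ : ℍ[ℝ]ˣ) : ℍ[ℝ]) = σq := rfl

theorem T_mul_gen : ∀ x ∈ T, x * (ui : ℍ[ℝ]ˣ) ∈ T ∧ x * (uσ : ℍ[ℝ]ˣ) ∈ T := by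
  intro x hx
  obtain ⟨p, hp, rfl⟩ := mem_T.mp hx
  obtain ⟨⟨z1, hz1, he1⟩, ⟨z2, hz2, he2⟩⟩ := hclosed p hp
  constructor
  · have h : gq p * gq si = gq z1 := by
      rw [← gq16_qmul, he1, gq16_scale4]
    rw [ui_val, ← gq_si, h]
    exact mem_T.mpr ⟨z1, hz1, rfl⟩
  · have h : gq p * gq ss = gq z2 := by
      rw [← gq16_qmul, he2, gq16_scale4]
    rw [uσ_val, ← gq_ss, h]
    exact mem_T.mpr ⟨z2, hz2, rfl⟩

/-- The subgroup of units whose right multiplication preserves `T`. -/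
noncomputable def K : Subgroup ℍ[ℝ]ˣ where
  carrier := {u | ∀ x ∈ T, x * (u : ℍ[ℝ]) ∈ T}
  one_mem' := by intro x hx; simpa using hx
  mul_mem' := by
    intro u v hu hv x hx
    have := hv _ (hu x hx)
    simpa [mul_assoc] using this
  inv_mem' := by
    intro u hu x hx
    have himg : T.image (· * (u : ℍ[ℝ])) = T := by
      apply Finset.eq_of_subset_of_card_le
      · intro y hy
        obtain ⟨s, hs, rfl⟩ := Finset.mem_image.mp hy
        exact hu s hs
      · rw [Finset.card_image_of_injective _ (mul_left_injective₀ (Units.ne_zero u))]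
    rw [← himg] at hx
    obtain ⟨s, hs, rfl⟩ := Finset.mem_image.mp hx
    have h : (s * (u:ℍ[ℝ])) * ((u⁻¹ : ℍ[ℝ]ˣ) : ℍ[ℝ]) = s := by
      rw [mul_assoc, ← Units.val_mul, mul_inv_cancel, Units.val_one, mul_one]
    rw [h]
    exact hs

theorem binI_le_K : binI ≤ K := by
  rw [binI, Subgroup.closure_le]
  rintro x (rfl | rfl) <;> intro y hy
  · exact (T_mul_gen y hy).1
  · exact (T_mul_gen y hy).2

theorem one_mem_T : (1 : ℍ[ℝ]) ∈ T := mem_T.mpr ⟨qone, hone_mem, gq_one⟩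

theorem binI_coe_mem_T {u : ℍ[ℝ]ˣ} (hu : u ∈ binI) : ((u : ℍ[ℝ])) ∈ T := by
  simpa using binI_le_K hu 1 one_mem_T

theorem ui_mem_binI : ui ∈ binI := Subgroup.subset_closure (by simp)
theorem uσ_mem_binI : uσ ∈ binI := Subgroup.subset_closure (by simp)

theorem T_mem_binI : ∀ x ∈ T, ∃ u ∈ binI, ((u : ℍ[ℝ])) = x := by
  have key : ∀ n : ℕ, ∀ hn : n < L.length, ∃ u ∈ binI, ((u : ℍ[ℝ])) = gq (L.get ⟨n, hn⟩) := by
    intro n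
    induction n using Nat.strong_induction_on with
    | _ n ih =>
      intro hn
      rcases hwit ⟨n, hn⟩ with h1 | ⟨m, hm, hgen⟩
      · exact ⟨1, one_mem binI, by rw [h1, gq_one, Units.val_one]⟩
      · obtain ⟨u, hu, hue⟩ := ih m hm m.isLt
        rcases hgen with he | he
        · refine ⟨u * ui, mul_mem hu ui_mem_binI, ?_⟩
          rw [Units.val_mul, hue, ui_val, ← gq_si, ← gq16_qmul, ← he, gq16_scale4]
        · refine ⟨u * uσ, mul_mem hu uσ_mem_binI, ?_⟩
          rw [Units.val_mul, hue, uσ_val, ← gq_ss, ← gq16_qmul, ← he, gq16_scale4]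
  intro x hx
  obtain ⟨p, hp, rfl⟩ := mem_T.mp hx
  obtain ⟨n, hn⟩ := List.mem_iff_get.mp hp
  rw [← hn]
  exact key n n.isLt

theorem binI_image_eq : (Units.val '' (binI : Set ℍ[ℝ]ˣ)) = (T : Set ℍ[ℝ]) := by
  ext x
  constructor
  · rintro ⟨u, hu, rfl⟩
    exact binI_coe_mem_T hu
  · intro hx
    obtain ⟨u, hu, he⟩ := T_mem_binI x hx
    exact ⟨u, hu, he⟩

theorem norm_eq_one_of_normSq {a : ℍ[ℝ]} (h : Quaternion.normSq a = 1) : ‖a‖ = 1 := by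
  have h2 := Quaternion.normSq_eq_norm_mul_self a
  rw [h] at h2
  nlinarith [norm_nonneg a]

theorem norm_qi : ‖qi‖ = 1 := by
  apply norm_eq_one_of_normSq
  rw [Quaternion.normSq_def']
  simp [qi]

theorem norm_σq : ‖σq‖ = 1 := by
  apply norm_eq_one_of_normSq
  rw [Quaternion.normSq_def', σq_eq]
  show ((Real.sqrt 5 - 1)/4)^2 + (1/2:ℝ)^2 + ((1 + Real.sqrt 5)/4)^2 + (0:ℝ)^2 = 1
  linear_combination s5 / 8

/-- The binary icosahedral group `ℐ = ⟨i, σ⟩` consists of unit quaternions, has order 120,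
and contains the binary tetrahedral group `𝒯` as a subgroup. -/
theorem binaryIcosahedral_card_eq_120_and_T_le :
    (∀ g ∈ binI, ‖(g : ℍ[ℝ])‖ = 1) ∧ Nat.card binI = 120 ∧ binT ≤ binI := by
  refine ⟨?_, ?_, ?_⟩
  · intro g hg
    refine Subgroup.closure_induction (p := fun u _ => ‖((u : ℍ[ℝ]ˣ) : ℍ[ℝ])‖ = 1) ?_ ?_ ?_ ?_ hg
    · rintro x (rfl | rfl)
      · simpa [ui_val] using norm_qi
      · simpa [uσ_val] using norm_σq
    · simp
    · intro x y _ _ hx hy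
      rw [Units.val_mul, norm_mul, hx, hy, one_mul]
    · intro x _ hx
      rw [Units.val_inv_eq_inv_val, norm_inv, hx, inv_one]
  · have h1 : Nat.card binI = (binI : Set ℍ[ℝ]ˣ).ncard := by
      rw [← Nat.card_coe_set_eq]
      rfl
    rw [h1, ← Set.ncard_image_of_injective (binI : Set ℍ[ℝ]ˣ) Units.val_injective,
      binI_image_eq, Set.ncard_coe_finset, T_card]
  · have hϖT : ϖ ∈ T := mem_T.mpr ⟨sϖ, hϖ_mem, gq_sϖ⟩
    obtain ⟨u, hu, he⟩ := T_mem_binI ϖ hϖT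
    have huϖ : uϖ = u := Units.ext (by rw [he]; rfl)
    rw [binT, Subgroup.closure_le]
    rintro x (rfl | rfl)
    · exact ui_mem_binI
    · exact huϖ ▸ hu
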